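/- arXiv:0911.2077 — 2 statements merged into one kernel-verified Lean document; each statement's English description precedes it below -/
import Mathlib

section
/- For odd n and p ∈ [0, 1/2), P[B(p,n) ≥ n/2] ≥ (1−2p) e^{l(n+1)} (2σ)^{n+1} / ((1 − 4σ²√((n+1)/(n+3))) √(2π(n+1))), where σ = √(p(1−p)) and l(n) = −(9n+1)/(3n(12n+1)). -/
/-
Write n = 2m + 1, q = 1 - p and w_j = P[B(p, n) = m + 1 + j], so the tail is T = ∑_{j ≤ m} w_j.
The flows δ_j = p w_j - q w_{j+1} (`upperFlow m p j`) satisfy (m + j + 2) δ_j = (2j + 2) p w_j,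
hence q δ_{j+1} - p δ_j ≤ 2pq w_{j+1} / (m + 2) and q δ_0 = 2pq w_0 / (m + 2). Summing these
and telescoping ∑ δ_j = (p - q) T + q w_0 gives
(1 - 2p) C(2m+1, m+1) (pq)^(m+1) ≤ T ((1 - 2p)² + 2pq / (m + 2))
                                  ≤ T (1 - 4pq √((m+1)/(m+2))).

For the central binomial coefficient we use Robbins' bounds
e^(1/(12k+1)) ≤ s_k / √π ≤ e^(1/(12k)) on the Stirling sequence s_k = k! / (√(2k) (k/e)^k):
since l(2M) = 1/(24M + 1) - 1/(6M), they give C(2M, M) ≥ 4^M e^(l(2M)) / √(πM).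
The lower bound comes from comparing the series for log s_k - log s_{k+1} with a geometric series.
-/

open Real

noncomputable def binomTail (n k : ℕ) (p : ℝ) : ℝ :=
  ∑ h ∈ Finset.Icc k n, (n.choose h : ℝ) * p ^ h * (1 - p) ^ (n - h)

noncomputable def l (x : ℝ) : ℝ := -(9 * x + 1) / (3 * x * (12 * x + 1))

open Finset Filter Topology

namespace Stirling

theorem log_stirlingSeq_sdiff_ge {n : ℕ} (hn : n ≠ 0) :
    1 / (12 * n + 1) - 1 / (12 * (n + 1) + 1) ≤
      log (stirlingSeq n) - log (stirlingSeq (n + 1)) := by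
  obtain ⟨j, rfl⟩ := Nat.exists_eq_succ_of_ne_zero hn
  set r : ℝ := (1 / (2 * ↑(j + 1) + 1)) ^ 2 with hr
  have hr1 : r / 3 < 1 := by
    have : r ≤ 1 := pow_le_one₀ (by positivity) (by rw [div_le_one (by positivity)]; linarith)
    linarith
  have hgeom := (hasSum_geometric_of_lt_one (by positivity) hr1).mul_left (r / 3)
  have hterm (k : ℕ) : r / 3 * (r / 3) ^ k ≤ 1 / (2 * ↑(k + 1) + 1) * r ^ (k + 1) := by
    have h3 : (2 * ↑(k + 1) + 1 : ℝ) ≤ 3 ^ (k + 1) := by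
      have := one_add_mul_le_pow (show (-2 : ℝ) ≤ 2 by norm_num) (k + 1)
      norm_num at this ⊢
      linarith
    rw [← pow_succ', div_pow, div_eq_mul_one_div (r ^ (k + 1)), mul_comm]
    gcongr
  refine le_trans ?_ (hasSum_le hterm hgeom (log_stirlingSeq_sdiff_hasSum j))
  -- the geometric sum is `1 / (3 (2n + 1)² - 1)`
  have hx : (1 : ℝ) ≤ ↑(j + 1) := by simp
  rw [hr, Nat.succ_eq_add_one]
  generalize (↑(j + 1) : ℝ) = x at hx ⊢
  field_simp
  rw [le_div_iff₀ (by nlinarith)]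
  nlinarith

theorem tendsto_log_stirlingSeq_sub_inv {a b : ℝ} (ha : 0 < a) :
    Tendsto (fun j : ℕ => log (stirlingSeq (j + 1)) - 1 / (a * ↑(j + 1) + b)) atTop
      (𝓝 (log √π)) := by
  have hlog : Tendsto (fun j : ℕ => log (stirlingSeq (j + 1))) atTop (𝓝 (log √π)) :=
    (tendsto_stirlingSeq_sqrt_pi.comp (tendsto_add_atTop_nat 1)).log (by positivity)
  have hinv : Tendsto (fun j : ℕ => 1 / (a * ↑(j + 1) + b)) atTop (𝓝 0) := by
    simp only [one_div]
    refine tendsto_inv_atTop_zero.comp (tendsto_atTop_add_const_right _ b ?_)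
    exact (tendsto_natCast_atTop_atTop.comp (tendsto_add_atTop_nat 1)).const_mul_atTop ha
  simpa using hlog.sub hinv

theorem sqrt_pi_mul_exp_le_stirlingSeq {n : ℕ} (hn : n ≠ 0) :
    √π * exp (1 / (12 * n + 1)) ≤ stirlingSeq n := by
  obtain ⟨j, rfl⟩ := Nat.exists_eq_succ_of_ne_zero hn
  have hanti : Antitone fun j : ℕ => log (stirlingSeq (j + 1)) - 1 / (12 * ↑(j + 1) + 1) :=
    antitone_nat_of_succ_le fun j => by
      have := log_stirlingSeq_sdiff_ge (Nat.succ_ne_zero j)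
      push_cast at this ⊢
      linarith
  have h := hanti.le_of_tendsto (tendsto_log_stirlingSeq_sub_inv (by norm_num)) j
  rw [← exp_log (stirlingSeq'_pos j), ← exp_log (by positivity : 0 < √π), ← exp_add]
  exact exp_le_exp.mpr (by linarith)

theorem stirlingSeq_le_sqrt_pi_mul_exp {n : ℕ} (hn : n ≠ 0) :
    stirlingSeq n ≤ √π * exp (1 / (12 * n)) := by
  obtain ⟨j, rfl⟩ := Nat.exists_eq_succ_of_ne_zero hn
  have hmono : Monotone fun j : ℕ => log (stirlingSeq (j + 1)) - 1 / (12 * ↑(j + 1)) :=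
    monotone_nat_of_le_succ fun j => by
      have := log_stirlingSeq_sdiff_le (j + 1)
      have hsplit : 1 / (12 * ((j + 1 : ℕ) : ℝ) * (((j + 1 : ℕ) : ℝ) + 1)) =
          1 / (12 * ((j + 1 : ℕ) : ℝ)) - 1 / (12 * (((j + 1 : ℕ) : ℝ) + 1)) := by
        field_simp; ring
      push_cast at this hsplit ⊢
      linarith
  have hlim : Tendsto (fun j : ℕ => log (stirlingSeq (j + 1)) - 1 / (12 * ↑(j + 1))) atTop
      (𝓝 (log √π)) := by
    simpa using tendsto_log_stirlingSeq_sub_inv (a := 12) (b := 0) (by norm_num)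
  have h := hmono.ge_of_tendsto hlim j
  rw [← exp_log (stirlingSeq'_pos j), ← exp_log (by positivity : 0 < √π), ← exp_add]
  exact exp_le_exp.mpr (by linarith)

theorem centralBinom_mul_sqrt_div_four_pow {M : ℕ} (hM : M ≠ 0) :
    (M.centralBinom : ℝ) * √M / 4 ^ M = stirlingSeq (2 * M) / stirlingSeq M ^ 2 := by
  rw [Nat.centralBinom_eq_two_mul_choose, Nat.cast_choose ℝ (by omega), stirlingSeq, stirlingSeq,
    show 2 * M - M = M by omega]
  push_cast
  rw [show (2 : ℝ) * (2 * M) = 2 ^ 2 * M by ring, sqrt_mul (by norm_num), sqrt_sq (by norm_num),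
    sqrt_mul (by norm_num), mul_div_assoc 2, mul_pow, pow_mul, div_pow (M : ℝ)]
  field_simp
  rw [div_pow, ← pow_mul]
  field_simp
  rw [sq_sqrt zero_le_two, pow_mul, pow_mul, pow_mul]
  ring

end Stirling

theorem l_two_mul {x : ℝ} (hx : 0 < x) : l (2 * x) = 1 / (24 * x + 1) - 1 / (6 * x) := by
  have : 24 * x + 1 ≠ 0 := by positivity
  unfold l
  field_simp
  ring

open Stirling in
theorem exp_l_mul_four_pow_le_centralBinom {M : ℕ} (hM : M ≠ 0) :
    exp (l (2 * M)) * 4 ^ M ≤ M.centralBinom * √(π * M) := by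
  have hx : (0 : ℝ) < M := by positivity
  have hlow := sqrt_pi_mul_exp_le_stirlingSeq (show 2 * M ≠ 0 by omega)
  have hup := stirlingSeq_le_sqrt_pi_mul_exp hM
  push_cast at hlow
  have hs : 0 < stirlingSeq M := by
    obtain ⟨j, rfl⟩ := Nat.exists_eq_succ_of_ne_zero hM
    exact stirlingSeq'_pos j
  have hs2 : 0 ≤ stirlingSeq (2 * M) := le_trans (by positivity) hlow
  calc exp (l (2 * M)) * 4 ^ M
    _ = √π * exp (1 / (12 * (2 * M) + 1)) / (√π * exp (1 / (12 * M))) ^ 2 *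
          √π * 4 ^ M := by
        rw [l_two_mul hx, exp_sub, mul_pow, ← exp_nat_mul]
        field_simp
        push_cast
        ring_nf
    _ ≤ stirlingSeq (2 * M) / stirlingSeq M ^ 2 * √π * 4 ^ M := by gcongr
    _ = M.centralBinom * √(π * M) := by
        rw [← centralBinom_mul_sqrt_div_four_pow hM, sqrt_mul pi_pos.le]
        field_simp

noncomputable def binomTerm (n k : ℕ) (p : ℝ) : ℝ :=
  (n.choose k : ℝ) * p ^ k * (1 - p) ^ (n - k)

theorem binomTail_eq_sum_range (n k : ℕ) (p : ℝ) :
    binomTail n k p = ∑ j ∈ range (n + 1 - k), binomTerm n (k + j) p := by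
  rw [binomTail, ← Ico_add_one_right_eq_Icc, sum_Ico_eq_sum_range]
  rfl

section binomTerm

variable {n k : ℕ} {p : ℝ}

theorem binomTerm_nonneg (hp0 : 0 ≤ p) (hp1 : p ≤ 1) : 0 ≤ binomTerm n k p := by
  have : 0 ≤ 1 - p := by linarith
  unfold binomTerm
  positivity

theorem binomTerm_eq_zero_of_lt (h : n < k) : binomTerm n k p = 0 := by
  simp [binomTerm, Nat.choose_eq_zero_of_lt h]

theorem binomTerm_succ :
    ((k : ℝ) + 1) * (1 - p) * binomTerm n (k + 1) p = ((n : ℝ) - k) * p * binomTerm n k p := by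
  rcases lt_or_ge k n with hk | hk
  · have hchoose : (n.choose (k + 1) : ℝ) * (k + 1) = n.choose k * ((n : ℝ) - k) := by
      rw [← Nat.cast_sub hk.le]
      exact_mod_cast Nat.choose_succ_right_eq n k
    have hpow : (1 - p) ^ (n - k) = (1 - p) ^ (n - (k + 1)) * (1 - p) := by
      rw [← pow_succ]; congr 1; omega
    unfold binomTerm
    rw [hpow, pow_succ]
    linear_combination (p ^ k * p * (1 - p) ^ (n - (k + 1)) * (1 - p)) * hchoose
  · rcases hk.eq_or_lt with rfl | hk
    · simp [binomTerm_eq_zero_of_lt (Nat.lt_succ_self n)]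
    · simp [binomTerm_eq_zero_of_lt hk, binomTerm_eq_zero_of_lt (hk.trans (Nat.lt_succ_self k))]

theorem binomTail_nonneg (hp0 : 0 ≤ p) (hp1 : p ≤ 1) : 0 ≤ binomTail n k p := by
  rw [binomTail_eq_sum_range]
  exact sum_nonneg fun j _ => binomTerm_nonneg hp0 hp1

end binomTerm

noncomputable def upperFlow (m : ℕ) (p : ℝ) (j : ℕ) : ℝ :=
  p * binomTerm (2 * m + 1) (m + 1 + j) p - (1 - p) * binomTerm (2 * m + 1) (m + 1 + (j + 1)) p

section upperFlow

variable {m : ℕ} {p : ℝ}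

theorem binomTerm_upper_succ (j : ℕ) :
    ((m : ℝ) + j + 2) * (1 - p) * binomTerm (2 * m + 1) (m + 1 + (j + 1)) p =
      ((m : ℝ) - j) * p * binomTerm (2 * m + 1) (m + 1 + j) p := by
  have h := binomTerm_succ (n := 2 * m + 1) (k := m + 1 + j) (p := p)
  push_cast at h
  linear_combination h

theorem upperFlow_mul (j : ℕ) :
    ((m : ℝ) + j + 2) * upperFlow m p j =
      (2 * j + 2) * p * binomTerm (2 * m + 1) (m + 1 + j) p := by
  unfold upperFlow
  linear_combination -binomTerm_upper_succ (m := m) (p := p) j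

theorem sum_upperFlow :
    ∑ j ∈ range (m + 1), upperFlow m p j =
      (p - (1 - p)) * ∑ j ∈ range (m + 1), binomTerm (2 * m + 1) (m + 1 + j) p
        + (1 - p) * binomTerm (2 * m + 1) (m + 1) p := by
  have htel := sum_range_sub' (fun j => binomTerm (2 * m + 1) (m + 1 + j) p) (m + 1)
  simp only [add_zero, binomTerm_eq_zero_of_lt (show 2 * m + 1 < m + 1 + (m + 1) by omega),
    sub_zero] at htel
  rw [mul_sum, ← htel, mul_sum, ← sum_add_distrib]
  refine sum_congr rfl fun j _ => ?_
  unfold upperFlow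
  ring

theorem one_sub_mul_upperFlow_zero :
    (1 - p) * upperFlow m p 0 =
      2 / (m + 2) * (p * (1 - p)) * binomTerm (2 * m + 1) (m + 1) p := by
  have h := upperFlow_mul (m := m) (p := p) 0
  field_simp
  push_cast at h
  linear_combination (1 - p) * h

theorem upperFlow_step_le (hp0 : 0 ≤ p) (hp1 : p ≤ 1) {j : ℕ} (hj : j < m) :
    (1 - p) * upperFlow m p (j + 1) - p * upperFlow m p j ≤
      2 / (m + 2) * (p * (1 - p)) * binomTerm (2 * m + 1) (m + 1 + (j + 1)) p := by
  set W := binomTerm (2 * m + 1) (m + 1 + (j + 1)) p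
  have hjm : (j : ℝ) + 1 ≤ m := by exact_mod_cast hj
  have hW : 0 ≤ p * (1 - p) * W :=
    mul_nonneg (mul_nonneg hp0 (by linarith)) (binomTerm_nonneg hp0 hp1)
  have hnext :
      (1 - p) * upperFlow m p (j + 1) = (2 * j + 4) / (m + j + 3) * (p * (1 - p) * W) := by
    have h := upperFlow_mul (m := m) (p := p) (j + 1)
    field_simp
    push_cast at h
    linear_combination (1 - p) * h
  have hprev : p * upperFlow m p j = (2 * j + 2) / (m - j) * (p * (1 - p) * W) := by
    have h := upperFlow_mul (m := m) (p := p) j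
    have hrec := binomTerm_upper_succ (m := m) (p := p) j
    have hne : (m : ℝ) - j ≠ 0 := by linarith
    rw [div_mul_eq_mul_div, eq_div_iff hne]
    refine mul_left_cancel₀ (by positivity : (m : ℝ) + j + 2 ≠ 0) ?_
    linear_combination (p * (m - j)) * h - (2 * j + 2) * p * hrec
  have hcoef : (2 * (j : ℝ) + 4) / (m + j + 3) - (2 * j + 2) / (m - j) ≤ 2 / (m + 2) := by
    rw [div_sub_div _ _ (by positivity) (by linarith),
      div_le_div_iff₀ (by nlinarith) (by positivity)]
    have hj0 : (0 : ℝ) ≤ j := j.cast_nonneg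
    nlinarith [mul_nonneg (mul_nonneg hj0 hj0) (m.cast_nonneg : (0 : ℝ) ≤ m)]
  rw [hnext, hprev, ← sub_mul, mul_assoc (2 / _ : ℝ)]
  exact mul_le_mul_of_nonneg_right hcoef hW

theorem one_sub_two_mul_sum_upperFlow_le (hp0 : 0 ≤ p) (hp1 : p ≤ 1) :
    (1 - 2 * p) * ∑ j ∈ range (m + 1), upperFlow m p j ≤
      2 / (m + 2) * (p * (1 - p)) *
        ∑ j ∈ range (m + 1), binomTerm (2 * m + 1) (m + 1 + j) p := by
  have hsteps := sum_le_sum fun j (hj : j ∈ range m) =>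
    upperFlow_step_le hp0 hp1 (mem_range.mp hj)
  have hlast : 0 ≤ p * upperFlow m p m := by
    have h := binomTerm_nonneg (n := 2 * m + 1) (k := m + 1 + m) hp0 hp1
    simp only [upperFlow, binomTerm_eq_zero_of_lt (show 2 * m + 1 < m + 1 + (m + 1) by omega),
      mul_zero, sub_zero]
    exact mul_nonneg hp0 (mul_nonneg hp0 h)
  rw [sum_sub_distrib, ← mul_sum, ← mul_sum, ← mul_sum] at hsteps
  -- (1 - 2p) ∑ δ_j = q δ_0 + ∑_{j < m} (q δ_{j+1} - p δ_j) - p δ_m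
  linear_combination hsteps + hlast + (1 - p) * sum_range_succ' (upperFlow m p) m
    - p * sum_range_succ (upperFlow m p) m + one_sub_mul_upperFlow_zero
    - 2 / (m + 2) * (p * (1 - p)) *
      sum_range_succ' (fun j => binomTerm (2 * m + 1) (m + 1 + j) p) m

theorem one_sub_mul_binomTerm_eq_choose_mul :
    (1 - p) * binomTerm (2 * m + 1) (m + 1) p =
      (2 * m + 1).choose (m + 1) * (p * (1 - p)) ^ (m + 1) := by
  rw [binomTerm, show 2 * m + 1 - (m + 1) = m by omega, mul_pow, pow_succ (1 - p) m]
  ring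

theorem choose_mul_le_binomTail_mul (hp0 : 0 ≤ p) (hp1 : p ≤ 1) :
    (1 - 2 * p) * (2 * m + 1).choose (m + 1) * (p * (1 - p)) ^ (m + 1) ≤
      binomTail (2 * m + 1) (m + 1) p * ((1 - 2 * p) ^ 2 + 2 / (m + 2) * (p * (1 - p))) := by
  have hflow := one_sub_two_mul_sum_upperFlow_le (m := m) hp0 hp1
  rw [sum_upperFlow] at hflow
  rw [binomTail_eq_sum_range, show 2 * m + 1 + 1 - (m + 1) = m + 1 by omega, mul_assoc,
    ← one_sub_mul_binomTerm_eq_choose_mul]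
  linear_combination hflow

theorem one_div_le_one_sub_sqrt_div {x : ℝ} (hx : 0 ≤ x) :
    1 / (2 * (x + 1)) ≤ 1 - √(x / (x + 1)) := by
  have hsqrt : √(x / (x + 1)) ≤ 1 - 1 / (2 * (x + 1)) := by
    rw [sqrt_le_iff]
    refine ⟨by rw [sub_nonneg, div_le_one (by positivity)]; linarith, ?_⟩
    rw [div_le_iff₀ (by positivity)]
    field_simp
    nlinarith
  linarith

theorem choose_mul_le_binomTail_mul_sqrt (hp0 : 0 ≤ p) (hp1 : p ≤ 1) :
    (1 - 2 * p) * (2 * m + 1).choose (m + 1) * (p * (1 - p)) ^ (m + 1) ≤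
      binomTail (2 * m + 1) (m + 1) p * (1 - 4 * (p * (1 - p)) * √((m + 1) / (m + 2))) := by
  refine (choose_mul_le_binomTail_mul hp0 hp1).trans
    (mul_le_mul_of_nonneg_left ?_ (binomTail_nonneg hp0 hp1))
  have hb := one_div_le_one_sub_sqrt_div (x := (m : ℝ) + 1) (by positivity)
  rw [show (m : ℝ) + 1 + 1 = m + 2 by ring] at hb
  have hpq : 0 ≤ p * (1 - p) := mul_nonneg hp0 (by linarith)
  have hc : 2 / ((m : ℝ) + 2) = 4 * (1 / (2 * (m + 2))) := by field_simp; ring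
  nlinarith [mul_le_mul_of_nonneg_left hb hpq]

end upperFlow

theorem Nat.centralBinom_succ_eq_two_mul_choose (m : ℕ) :
    (m + 1).centralBinom = 2 * (2 * m + 1).choose (m + 1) := by
  rw [Nat.centralBinom_eq_two_mul_choose, show 2 * (m + 1) = 2 * m + 1 + 1 by ring,
    Nat.choose_succ_succ, Nat.choose_symm_half]
  ring

theorem exp_l_mul_le_binomTail_mul {m : ℕ} {p : ℝ} (hp0 : 0 ≤ p) (hp : p ≤ 1 / 2) :
    (1 - 2 * p) * exp (l (2 * (m + 1 : ℕ))) * (4 ^ (m + 1) * (p * (1 - p)) ^ (m + 1)) ≤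
      binomTail (2 * m + 1) (m + 1) p *
        ((1 - 4 * (p * (1 - p)) * √((m + 1) / (m + 2))) * (2 * √(π * (m + 1 : ℕ)))) := by
  have hcentral := exp_l_mul_four_pow_le_centralBinom (M := m + 1) (by omega)
  have htail := choose_mul_le_binomTail_mul_sqrt (m := m) hp0 (by linarith)
  rw [Nat.centralBinom_succ_eq_two_mul_choose, Nat.cast_mul, Nat.cast_two] at hcentral
  have hcoef : 0 ≤ (1 - 2 * p) * (p * (1 - p)) ^ (m + 1) :=
    mul_nonneg (by linarith) (pow_nonneg (mul_nonneg hp0 (by linarith)) _)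
  calc (1 - 2 * p) * exp (l (2 * (m + 1 : ℕ))) * (4 ^ (m + 1) * (p * (1 - p)) ^ (m + 1))
      = (1 - 2 * p) * (p * (1 - p)) ^ (m + 1) * (exp (l (2 * (m + 1 : ℕ))) * 4 ^ (m + 1)) := by
        ring
    _ ≤ (1 - 2 * p) * (p * (1 - p)) ^ (m + 1) *
          (2 * (2 * m + 1).choose (m + 1) * √(π * (m + 1 : ℕ))) :=
        mul_le_mul_of_nonneg_left hcentral hcoef
    _ = (1 - 2 * p) * (2 * m + 1).choose (m + 1) * (p * (1 - p)) ^ (m + 1) *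
          (2 * √(π * (m + 1 : ℕ))) := by
        ring
    _ ≤ _ := by
        rw [← mul_assoc (binomTail _ _ _)]
        exact mul_le_mul_of_nonneg_right htail (by positivity)

theorem stmt10 (n : ℕ) (hn : Odd n) (p : ℝ) (hp0 : 0 ≤ p) (hp : p < 1 / 2) :
    binomTail n ((n + 1) / 2) p
      ≥ (1 - 2 * p) * Real.exp (l (n + 1)) * (2 * Real.sqrt (p * (1 - p))) ^ (n + 1)
          / ((1 - 4 * (p * (1 - p)) * Real.sqrt (((n : ℝ) + 1) / ((n : ℝ) + 3)))
              * Real.sqrt (2 * π * (n + 1))) := by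
  obtain ⟨m, rfl⟩ := hn
  have hpq : 0 ≤ p * (1 - p) := mul_nonneg hp0 (by linarith)
  have hden : 0 < 1 - 4 * (p * (1 - p)) * √(((m : ℝ) + 1) / (m + 2)) := by
    have hb : √(((m : ℝ) + 1) / (m + 2)) ≤ 1 :=
      sqrt_le_one.mpr ((div_le_one (by positivity)).mpr (by linarith))
    nlinarith [mul_le_mul_of_nonneg_left hb hpq]
  have hpow :
      (2 * √(p * (1 - p))) ^ (2 * m + 1 + 1) = 4 ^ (m + 1) * (p * (1 - p)) ^ (m + 1) := by
    rw [show 2 * m + 1 + 1 = 2 * (m + 1) by ring, pow_mul, mul_pow, sq_sqrt hpq, mul_pow]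
    norm_num
  have hsqrt : √(2 * π * ((2 * m + 1 : ℕ) + 1 : ℝ)) = 2 * √(π * (m + 1 : ℕ)) := by
    rw [show (2 : ℝ) * π * ((2 * m + 1 : ℕ) + 1) = 2 ^ 2 * (π * (m + 1 : ℕ)) by
      push_cast; ring, sqrt_mul (by norm_num), sqrt_sq (by norm_num)]
  have hratio :
      ((2 * m + 1 : ℕ) + 1 : ℝ) / ((2 * m + 1 : ℕ) + 3) = ((m : ℝ) + 1) / (m + 2) := by
    push_cast
    rw [div_eq_div_iff (by positivity) (by positivity)]
    ring
  have hl : l ((2 * m + 1 : ℕ) + 1) = l (2 * (m + 1 : ℕ)) := by push_cast; ring_nf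
  rw [ge_iff_le, show (2 * m + 1 + 1) / 2 = m + 1 by omega, hratio, hl, hpow, hsqrt,
    div_le_iff₀ (mul_pos hden (by positivity))]
  exact exp_l_mul_le_binomTail_mul hp0 hp.le
end

section
/- For odd n, integer k with 0 ≤ k < n/2, and p ∈ (0,1), P[B(p,n) ≥ n/2 + k] = p^{2k+1} − (p/(1−p))^k · Σ_{j=k+1}^{(n−1)/2} (1/2 − p − k/(2j)) C(2j, j+k) (p(1−p))^j. -/
open Real

/-!
Write `n = 2m + 1` and `q = 1 - p`. Passing from `2m + 1` to `2m + 3` trials while raising the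
threshold by one changes the tail by `p C(2m+2, m+1+k) pᵐ⁺¹⁺ᵏ qᵐ⁺¹⁻ᵏ - C(2m+1, m+1+k) pᵐ⁺¹⁺ᵏ qᵐ⁺¹⁻ᵏ`
(Pascal's rule applied twice, conditioning on the last two trials), and since
`C(2m+1, m+1+k) = (1/2 - k/(2(m+1))) C(2m+2, m+1+k)` this is exactly minus the `j = m + 1` summand.
Summing these increments from the base case `m = k`, where the tail is `p²ᵏ⁺¹`, gives the formula.
-/

open Finset

lemma binomTail_self (n : ℕ) (p : ℝ) : binomTail n n p = p ^ n := by
  simp [binomTail]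

lemma binomTail_eq_add_binomTail_succ {n x : ℕ} (h : x ≤ n) (p : ℝ) :
    binomTail n x p = n.choose x * p ^ x * (1 - p) ^ (n - x) + binomTail n (x + 1) p := by
  rw [binomTail, Icc_eq_cons_Ioc h, sum_cons, ← Icc_add_one_left_eq_Ioc, binomTail]

lemma binomTail_succ_succ (n y : ℕ) (p : ℝ) :
    binomTail (n + 1) (y + 1) p = p * binomTail n y p + (1 - p) * binomTail n (y + 1) p := by
  have hshift : ∀ i, (n.choose (i + 1) : ℝ) * p ^ (i + 1) * (1 - p) ^ (n - i)
      = (1 - p) * ((n.choose (i + 1) : ℝ) * p ^ (i + 1) * (1 - p) ^ (n - (i + 1))) := by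
    intro i
    rcases Nat.lt_or_ge i n with hi | hi
    · rw [show n - i = n - (i + 1) + 1 by omega]; ring
    · simp [Nat.choose_eq_zero_of_lt (Nat.lt_succ_of_le hi)]
  rw [binomTail, ← map_add_right_Icc y n 1, sum_map]
  simp only [addRightEmbedding_apply, Nat.choose_succ_succ', Nat.cast_add, Nat.add_sub_add_right,
    add_mul, sum_add_distrib, hshift, ← mul_sum]
  congr 1
  · rw [binomTail, mul_sum]; exact sum_congr rfl fun i _ => by ring
  · rw [binomTail]; symm
    rw [sum_subset (Icc_subset_Icc_right (Nat.le_add_right n 1)), ← map_add_right_Icc, sum_map]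
    · rfl
    · intro h hh hhn
      have : n < h := by simp only [mem_Icc] at hh hhn; omega
      simp [Nat.choose_eq_zero_of_lt this]

lemma cast_choose_two_mul_add_one {m k : ℕ} (hk : k ≤ m) :
    ((2 * m + 1).choose (m + 1 + k) : ℝ)
      = (1 / 2 - k / (2 * (m + 1 : ℝ))) * (2 * (m + 1)).choose (m + 1 + k) := by
  have h := Nat.choose_mul_succ_eq (2 * m + 1) (m + 1 + k)
  rw [show 2 * m + 1 + 1 = 2 * (m + 1) by ring, show 2 * (m + 1) - (m + 1 + k) = m + 1 - k by omega]
    at h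
  have hr : ((2 * m + 1).choose (m + 1 + k) : ℝ) * (2 * (m + 1))
      = (2 * (m + 1)).choose (m + 1 + k) * (m + 1 - k) := by
    have h' := congrArg (Nat.cast (R := ℝ)) h
    push_cast [Nat.cast_sub (show k ≤ m + 1 by omega)] at h'
    exact h'
  field_simp
  linear_combination hr

lemma div_pow_mul_mul_pow {K : Type*} [Field K] {a b : K} (hb : b ≠ 0) {k j : ℕ} (hkj : k ≤ j) :
    (a / b) ^ k * (a * b) ^ j = a ^ (j + k) * b ^ (j - k) := by
  obtain ⟨d, rfl⟩ := Nat.exists_eq_add_of_le hkj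
  rw [Nat.add_sub_cancel_left, div_pow, mul_pow, pow_add, pow_add]
  field_simp
  ring

noncomputable def centralTailTerm (k : ℕ) (p : ℝ) (j : ℕ) : ℝ :=
  (1 / 2 - p - (k : ℝ) / (2 * (j : ℝ))) * (((2 * j).choose (j + k) : ℕ) : ℝ) * (p * (1 - p)) ^ j

lemma binomTail_add_two_succ {n y : ℕ} (h : y ≤ n) (p : ℝ) :
    binomTail (n + 2) (y + 1) p
      = binomTail n y p + (p * (n + 1).choose y - n.choose y) * p ^ y * (1 - p) ^ (n + 1 - y) := by
  have e1 := binomTail_succ_succ (n + 1) y p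
  have e2 := binomTail_succ_succ n y p
  have d1 := binomTail_eq_add_binomTail_succ h p
  have d2 := binomTail_eq_add_binomTail_succ (by omega : y ≤ n + 1) p
  rw [show n + 1 - y = n - y + 1 by omega] at d2 ⊢
  linear_combination e1 + p * d2 + e2 - (1 - p) * d1

lemma binomTail_central_succ {m k : ℕ} (hk : k ≤ m) {p : ℝ} (hp : p ≠ 1) :
    binomTail (2 * (m + 1) + 1) (m + 1 + 1 + k) p
      = binomTail (2 * m + 1) (m + 1 + k) p - (p / (1 - p)) ^ k * centralTailTerm k p (m + 1) := by
  have hq : 1 - p ≠ 0 := sub_ne_zero.mpr hp.symm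
  rw [show 2 * (m + 1) + 1 = 2 * m + 1 + 2 by ring, show m + 1 + 1 + k = m + 1 + k + 1 by ring,
    binomTail_add_two_succ (by omega), centralTailTerm, mul_left_comm,
    div_pow_mul_mul_pow hq (by omega : k ≤ m + 1), cast_choose_two_mul_add_one hk,
    show 2 * m + 1 + 1 - (m + 1 + k) = m + 1 - k by omega, show 2 * m + 1 + 1 = 2 * (m + 1) by ring]
  push_cast
  ring

lemma binomTail_central (k d : ℕ) {p : ℝ} (hp : p ≠ 1) :
    binomTail (2 * (k + d) + 1) (k + d + 1 + k) p
      = p ^ (2 * k + 1) - (p / (1 - p)) ^ k * ∑ j ∈ Icc (k + 1) (k + d), centralTailTerm k p j := by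
  induction d with
  | zero =>
    rw [Icc_eq_empty (by omega), sum_empty, show k + 0 + 1 + k = 2 * (k + 0) + 1 by ring,
      binomTail_self]
    ring
  | succ d ih =>
    rw [← add_assoc, binomTail_central_succ (by omega) hp, ih, sum_Icc_succ_top (by omega)]
    ring

theorem stmt19_general (n k : ℕ) (hn : Odd n) (hk : 2 * k < n) (p : ℝ) (hp1 : p < 1) :
    binomTail n ((n + 1) / 2 + k) p
      = p ^ (2 * k + 1)
        - (p / (1 - p)) ^ k * ∑ j ∈ Finset.Icc (k + 1) ((n - 1) / 2),
            (1 / 2 - p - (k : ℝ) / (2 * (j : ℝ)))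
              * (((2 * j).choose (j + k) : ℕ) : ℝ) * (p * (1 - p)) ^ j := by
  obtain ⟨m, rfl⟩ := hn
  obtain ⟨d, rfl⟩ := Nat.exists_eq_add_of_le (show k ≤ m by omega)
  rw [show (2 * (k + d) + 1 + 1) / 2 + k = k + d + 1 + k by omega,
    show (2 * (k + d) + 1 - 1) / 2 = k + d by omega]
  exact binomTail_central k d hp1.ne

theorem stmt19 (n k : ℕ) (hn : Odd n) (hk : 2 * k < n) (p : ℝ) (hp0 : 0 < p) (hp1 : p < 1) :
    binomTail n ((n + 1) / 2 + k) p
      = p ^ (2 * k + 1)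
        - (p / (1 - p)) ^ k * ∑ j ∈ Finset.Icc (k + 1) ((n - 1) / 2),
            (1 / 2 - p - (k : ℝ) / (2 * (j : ℝ)))
              * (((2 * j).choose (j + k) : ℕ) : ℝ) * (p * (1 - p)) ^ j :=
  stmt19_general n k hn hk p hp1
end
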